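/- Let μ and ν be probability measures on ℝ, each with integrable identity of mean zero, ν((-∞,0)) = 1/2 = ν((0,∞)). Let F > 0, H < 0 and C be real numbers and set π_x(θ,ω) = (B + θ)·F + ω·H − C for a real constant B. Let v < 0. Then, under the product measure μ ⊗ ν, the cross-partial N = v·[ (1/2)·∫_{ℝ×(-∞,0)} π_x d(μ⊗ν) − (1/2)·∫_{ℝ×(0,∞)} π_x d(μ⊗ν) ] is strictly negative; consequently, for any D < 0, ∂x*/∂γ = −N/D is strictly negative. (Proposition 3.1, risk-decreasing case: an index insurance contract triggered on the extraction shock at ω̄ = 0 decreases optimal input use and harvest when h'(x) < 0 and the shocks are independent.) -/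

import Mathlib

open MeasureTheory Set

/- Under the product measure the stock shock is independent of the trigger and has mean zero,
so it contributes the same to both trigger states, as does the constant part of `π_x`, since
the states have equal mass. What remains is `N = v·H·(∫_{ω<0} ω dν − ∫_{ω>0} ω dν)/2`, where
`v·H > 0` and the difference is negative. -/

lemma setIntegral_pos_of_forall_pos {X : Type*} [MeasurableSpace X] {μ : Measure X}
    {s : Set X} {f : X → ℝ} (hs : MeasurableSet s) (hpos : ∀ x ∈ s, 0 < f x)
    (hfi : IntegrableOn f s μ) (hμs : μ s ≠ 0) : 0 < ∫ x in s, f x ∂μ := by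
  have hsupp : Function.support f ∩ s = s :=
    inter_eq_self_of_subset_right fun x hx => (hpos x hx).ne'
  rw [setIntegral_pos_iff_support_of_nonneg_ae
    (ae_restrict_of_forall_mem hs fun x hx => (hpos x hx).le) hfi, hsupp]
  exact pos_iff_ne_zero.mpr hμs

lemma setIntegral_univ_prod_add {α β E : Type*} [MeasurableSpace α] [MeasurableSpace β]
    [NormedAddCommGroup E] [NormedSpace ℝ E] {μ : Measure α} {ν : Measure β}
    [IsFiniteMeasure μ] [IsFiniteMeasure ν] {S : Set β} {f : α → E} {g : β → E}
    (hf : Integrable f μ) (hg : IntegrableOn g S ν) :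
    ∫ p in univ ×ˢ S, f p.1 + g p.2 ∂(μ.prod ν)
      = ν.real S • ∫ x, f x ∂μ + μ.real univ • ∫ y in S, g y ∂ν := by
  rw [← Measure.prod_restrict, Measure.restrict_univ,
    integral_add (hf.comp_fst _) (hg.comp_snd μ), integral_fun_fst, integral_fun_snd,
    measureReal_restrict_apply_univ]

lemma setIntegral_univ_prod_marginalProfit (μ ν : Measure ℝ) [IsProbabilityMeasure μ]
    [IsFiniteMeasure ν] (hIntμ : Integrable id μ) (hmeanμ : ∫ θ, θ ∂μ = 0)
    (hIntν : Integrable id ν) (S : Set ℝ) (B F H C : ℝ) :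
    ∫ p in univ ×ˢ S, ((B + p.1) * F + p.2 * H - C) ∂(μ.prod ν)
      = (B * F - C) * ν.real S + H * ∫ ω in S, ω ∂ν := by
  have hsplit : ∀ p : ℝ × ℝ, (B + p.1) * F + p.2 * H - C
      = (fun θ => θ * F + B * F) p.1 + (fun ω => ω * H - C) p.2 := fun p => by ring
  have hIntθ : Integrable (fun θ : ℝ => θ) μ := hIntμ
  have hIntS : IntegrableOn (fun ω : ℝ => ω) S ν := hIntν.integrableOn
  have hf : Integrable (fun θ : ℝ => θ * F + B * F) μ :=
    (hIntθ.mul_const F).add (integrable_const _)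
  have hg : IntegrableOn (fun ω : ℝ => ω * H - C) S ν :=
    (hIntS.mul_const H).sub (integrableOn_const (measure_ne_top _ _))
  simp_rw [hsplit, setIntegral_univ_prod_add hf hg]
  rw [integral_add (hIntθ.mul_const F) (integrable_const _),
    integral_sub (hIntS.mul_const H) (integrableOn_const (measure_ne_top _ _))]
  simp only [integral_mul_const, hmeanμ, integral_const, measureReal_restrict_apply_univ,
    probReal_univ, smul_eq_mul]
  ring

theorem stmt_7_general (μ ν : Measure ℝ) [IsProbabilityMeasure μ] [IsProbabilityMeasure ν]
    (hIntμ : Integrable id μ) (hmeanμ : ∫ θ, θ ∂μ = 0)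
    (hIntν : Integrable id ν)
    (hmed1 : ν (Iio 0) = 1/2) (hmed2 : ν (Ioi 0) = 1/2)
    (B F H C v : ℝ) (hH : H < 0) (hv : v < 0)
    (N : ℝ)
    (hN : N = v * ((1/2) * ∫ p in (univ : Set ℝ) ×ˢ (Iio (0 : ℝ)),
              ((B + p.1) * F + p.2 * H - C) ∂(μ.prod ν)
            - (1/2) * ∫ p in (univ : Set ℝ) ×ˢ (Ioi (0 : ℝ)),
              ((B + p.1) * F + p.2 * H - C) ∂(μ.prod ν))) :
    N < 0 ∧ ∀ D : ℝ, D < 0 → -N / D < 0 := by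
  have hneg : ∫ ω in Iio 0, ω ∂ν < 0 := by
    have := setIntegral_pos_of_forall_pos measurableSet_Iio (fun ω (hω : ω < 0) => neg_pos.mpr hω)
      hIntν.integrableOn.neg (by simp [hmed1])
    rwa [integral_neg, neg_pos] at this
  have hpos : 0 < ∫ ω in Ioi 0, ω ∂ν :=
    setIntegral_pos_of_forall_pos measurableSet_Ioi (fun _ hω => hω) hIntν.integrableOn
      (by simp [hmed2])
  have hN' : N = v * H * ((∫ ω in Iio 0, ω ∂ν) - ∫ ω in Ioi 0, ω ∂ν) / 2 := by
    rw [hN, setIntegral_univ_prod_marginalProfit μ ν hIntμ hmeanμ hIntν,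
      setIntegral_univ_prod_marginalProfit μ ν hIntμ hmeanμ hIntν, measureReal_def,
      measureReal_def, hmed1, hmed2]
    ring
  have hN0 : N < 0 := by
    rw [hN']
    exact div_neg_of_neg_of_pos (mul_neg_of_pos_of_neg (mul_pos_of_neg_of_neg hv hH)
      (by linarith)) two_pos
  exact ⟨hN0, fun D hD => div_neg_of_pos_of_neg (neg_pos.mpr hN0) hD⟩

/-- Proposition 3.1, risk-decreasing case: with independent mean-zero shocks
(product measure μ ⊗ ν), marginal profit π_x(θ,ω) = (B + θ)·F + ω·H − C with
F > 0 and H < 0, median-0 trigger on ω (ν(−∞,0) = 1/2 = ν(0,∞)), and concave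
utility (common second derivative v < 0), the cross-partial
N = v·[(1/2)·∫_{ℝ×(−∞,0)} π_x − (1/2)·∫_{ℝ×(0,∞)} π_x] is strictly negative;
hence for any D < 0, ∂x*/∂γ = −N/D < 0: the contract on the extraction shock
decreases optimal input use and harvest. -/
theorem stmt_7 (μ ν : Measure ℝ) [IsProbabilityMeasure μ] [IsProbabilityMeasure ν]
    (hIntμ : Integrable id μ) (hmeanμ : ∫ θ, θ ∂μ = 0)
    (hIntν : Integrable id ν) (hmeanν : ∫ ω, ω ∂ν = 0)
    (hmed1 : ν (Iio 0) = 1/2) (hmed2 : ν (Ioi 0) = 1/2)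
    (B F H C v : ℝ) (hF : 0 < F) (hH : H < 0) (hv : v < 0)
    (N : ℝ)
    (hN : N = v * ((1/2) * ∫ p in (univ : Set ℝ) ×ˢ (Iio (0 : ℝ)),
              ((B + p.1) * F + p.2 * H - C) ∂(μ.prod ν)
            - (1/2) * ∫ p in (univ : Set ℝ) ×ˢ (Ioi (0 : ℝ)),
              ((B + p.1) * F + p.2 * H - C) ∂(μ.prod ν))) :
    N < 0 ∧ ∀ D : ℝ, D < 0 → -N / D < 0 :=
  stmt_7_general μ ν hIntμ hmeanμ hIntν hmed1 hmed2 B F H C v hH hv N hN
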